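/- arXiv:2410.19366 — 2 statements merged into one kernel-verified Lean document; each statement's English description precedes it below -/
import Mathlib

section
/- For every n ∈ ℕ there exists a positive constant C (depending only on n) such that the following holds: for every real Hilbert space H, every bounded nonnegative selfadjoint operator A : H →L[ℝ] H with nonnegative square root S = √A, and every solution u of u'' + A u + u' = 0 with data (u0,u1), the function t ↦ Sⁿ u(t) satisfies ‖Sⁿ u(t)‖² + (1+t) E(Sⁿ u;t) ≤ C (1+t)^{−n} ‖(u0,u1)‖_{D(Lⁿ)}² for all t ≥ 0. -/
/-!
Write `w_j = Sʲ u` and let `E_j`, `M_j` be the energy and the squared `‖·‖_H`-norm of the state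
`(w_j, w_j')`. Along the flow `E_j' = -2 ‖w_j'‖²` and `M_j' = -E_j`, while
`M_{j+1} ≤ 3 E_{j+1} + E_j`. Hence, for `b = 1 / (6 (n + 1))`, the functional
`(1 + b t)ⁿ⁺¹ E_n + ∑_{j ≤ n} (1 + b t)ʲ M_j` is nonincreasing: what differentiating a weight
produces is absorbed, via `M_j ≤ 3 E_j + E_{j-1}`, by the dissipation of the levels `j` and
`j - 1`. Comparing its values at `t` and at `0` gives the decay. Finally `M_j(0)` is the squared
norm of `Sʲ (u0, u1)`; since `S` (acting componentwise) commutes with `L` and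
`‖S p‖_H² ≤ 4 (‖L p‖_H² + ‖p‖_H²)`, it is bounded by `8ʲ ‖(u0, u1)‖²_{D(Lʲ)}`.
-/

open Finset Set
open scoped RealInnerProductSpace

universe u

noncomputable def lyapunov (E M : ℕ → ℝ → ℝ) (b : ℝ) (n : ℕ) (t : ℝ) : ℝ :=
  (1 + b * t) ^ (n + 1) * E n t + ∑ j ∈ range (n + 1), (1 + b * t) ^ j * M j t

lemma lyapunov_deriv_nonpos {e m : ℕ → ℝ} {e' b ρ : ℝ} (n : ℕ) (he : ∀ j, 0 ≤ e j)
    (hm : ∀ j, m (j + 1) ≤ 3 * e (j + 1) + e j) (he' : e' ≤ 0) (hb : 0 ≤ b)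
    (hbn : 6 * (n + 1) * b ≤ 1) (hρ : 1 ≤ ρ) :
    (n + 1) * ρ ^ n * b * e n + ρ ^ (n + 1) * e'
      + ∑ j ∈ range (n + 1), (j * ρ ^ (j - 1) * b * m j - ρ ^ j * e j) ≤ 0 := by
  set F : ℕ → ℝ := fun j => ρ ^ j * e j
  have hF : ∀ j, 0 ≤ F j := fun j => mul_nonneg (by positivity) (he j)
  have hterm : ∀ i ∈ range n, (i + 1 : ℕ) * ρ ^ (i + 1 - 1) * b * m (i + 1)
      ≤ 1 / 2 * F (i + 1) + 1 / 4 * F i := by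
    intro i hi
    have hib : 6 * ((i + 1) * b) ≤ 1 := by
      have : (i : ℝ) + 1 ≤ n := by exact_mod_cast mem_range.mp hi
      nlinarith
    have hFi := hF i
    have hFi' : ρ ^ i * e (i + 1) ≤ F (i + 1) := by
      simp only [F, pow_succ]
      nlinarith [mul_nonneg (pow_nonneg (zero_le_one.trans hρ) i) (he (i + 1))]
    calc ((i + 1 : ℕ) : ℝ) * ρ ^ (i + 1 - 1) * b * m (i + 1)
        ≤ (i + 1) * b * (ρ ^ i * (3 * e (i + 1) + e i)) := by
          push_cast
          rw [show (i + 1) * b * (ρ ^ i * (3 * e (i + 1) + e i))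
            = (i + 1) * ρ ^ i * b * (3 * e (i + 1) + e i) by ring]
          exact mul_le_mul_of_nonneg_left (hm i) (by positivity)
      _ ≤ 1 / 2 * F (i + 1) + 1 / 4 * F i := by
          have h0 : 0 ≤ ρ ^ i * e (i + 1) := mul_nonneg (by positivity) (he (i + 1))
          simp only [F] at hFi ⊢
          nlinarith [mul_le_mul_of_nonneg_right hib h0, mul_le_mul_of_nonneg_right hib hFi]
  have hgain : ∑ j ∈ range (n + 1), (j : ℝ) * ρ ^ (j - 1) * b * m j
      ≤ 1 / 2 * ∑ j ∈ range (n + 1), F j + 1 / 4 * (∑ j ∈ range (n + 1), F j - F n) := by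
    rw [sum_range_succ', Nat.cast_zero, zero_mul, zero_mul, zero_mul, add_zero]
    refine (sum_le_sum hterm).trans ?_
    have hshift : ∑ i ∈ range n, F (i + 1) ≤ ∑ j ∈ range (n + 1), F j := by
      rw [sum_range_succ' F]; linarith [hF 0]
    rw [sum_add_distrib, ← mul_sum, ← mul_sum]
    linarith [sum_range_succ F n]
  have htop : (n + 1) * ρ ^ n * b * e n ≤ 1 / 4 * F n := by
    have : 0 ≤ F n := hF n
    simp only [F] at this ⊢
    nlinarith [mul_le_mul_of_nonneg_right hbn this]
  have hdiss : ρ ^ (n + 1) * e' ≤ 0 :=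
    mul_nonpos_of_nonneg_of_nonpos (pow_nonneg (zero_le_one.trans hρ) _) he'
  rw [sum_sub_distrib]
  nlinarith [sum_nonneg fun j (_ : j ∈ range (n + 1)) => hF j]

section Lyapunov

variable {E M : ℕ → ℝ → ℝ} {n : ℕ}

lemma antitoneOn_lyapunov {E' : ℝ → ℝ} {b : ℝ} (hE : ∀ j t, 0 ≤ t → 0 ≤ E j t)
    (hME : ∀ j t, 0 ≤ t → M (j + 1) t ≤ 3 * E (j + 1) t + E j t)
    (hE' : ∀ t, 0 ≤ t → HasDerivAt (E n) (E' t) t) (hE'_nonpos : ∀ t, 0 ≤ t → E' t ≤ 0)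
    (hM' : ∀ j t, 0 ≤ t → HasDerivAt (M j) (-E j t) t) (hb : 0 ≤ b)
    (hbn : 6 * (n + 1) * b ≤ 1) :
    AntitoneOn (lyapunov E M b n) (Ici 0) := by
  have hG : ∀ t, 0 ≤ t → HasDerivAt (lyapunov E M b n)
      ((n + 1) * (1 + b * t) ^ n * b * E n t + (1 + b * t) ^ (n + 1) * E' t
        + ∑ j ∈ range (n + 1), (j * (1 + b * t) ^ (j - 1) * b * M j t
          - (1 + b * t) ^ j * E j t)) t := by
    intro t ht
    have hρ : HasDerivAt (fun s => 1 + b * s) b t := by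
      simpa using ((hasDerivAt_id t).const_mul b).const_add 1
    refine (((hρ.fun_pow (n + 1)).fun_mul (hE' t ht)).fun_add
      (HasDerivAt.fun_sum fun j _ => (hρ.fun_pow j).fun_mul (hM' j t ht))).congr_deriv ?_
    simp only [Nat.add_sub_cancel, Nat.cast_succ, mul_neg, ← sub_eq_add_neg]
  refine antitoneOn_of_hasDerivWithinAt_nonpos (convex_Ici 0)
    (fun t ht => (hG t ht).continuousAt.continuousWithinAt)
    (fun t ht => (hG t (interior_subset ht)).hasDerivWithinAt) fun t ht => ?_
  have ht : 0 ≤ t := interior_subset ht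
  exact lyapunov_deriv_nonpos n (fun j => hE j t ht) (fun j => hME j t ht) (hE'_nonpos t ht) hb
    hbn (by nlinarith)

theorem pow_mul_le_of_lyapunov {E' : ℝ → ℝ} (hE : ∀ j t, 0 ≤ t → 0 ≤ E j t)
    (hM : ∀ j t, 0 ≤ t → 0 ≤ M j t)
    (hME : ∀ j t, 0 ≤ t → M (j + 1) t ≤ 3 * E (j + 1) t + E j t)
    (hE' : ∀ t, 0 ≤ t → HasDerivAt (E n) (E' t) t) (hE'_nonpos : ∀ t, 0 ≤ t → E' t ≤ 0)
    (hM' : ∀ j t, 0 ≤ t → HasDerivAt (M j) (-E j t) t) (hEM : E n 0 ≤ 2 * M n 0)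
    {t : ℝ} (ht : 0 ≤ t) :
    (1 + t) ^ n * (M n t + (1 + t) * E n t)
      ≤ 3 * (6 * (n + 1)) ^ (n + 1) * ∑ j ∈ range (n + 1), M j 0 := by
  set c : ℝ := 6 * (n + 1)
  have hc : 1 ≤ c := by simp only [c]; linarith [(n.cast_nonneg : (0 : ℝ) ≤ n)]
  set ρ := 1 + c⁻¹ * t
  have hρ : 1 + t ≤ c * ρ := by
    simp only [ρ]; rw [mul_add, mul_inv_cancel_left₀ (by positivity)]; nlinarith
  have hMn : M n 0 ≤ ∑ j ∈ range (n + 1), M j 0 :=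
    single_le_sum (fun j _ => hM j 0 le_rfl) (self_mem_range_succ n)
  have hlow : ρ ^ n * (M n t + ρ * E n t) ≤ lyapunov E M c⁻¹ n t := by
    have := single_le_sum (fun j _ => mul_nonneg (pow_nonneg (by positivity) j) (hM j t ht))
      (self_mem_range_succ n) (f := fun j => ρ ^ j * M j t)
    simp only [lyapunov]; rw [pow_succ]; nlinarith
  have hdecay := antitoneOn_lyapunov (b := c⁻¹) hE hME hE' hE'_nonpos hM' (by positivity)
    (by rw [mul_inv_cancel₀ (by positivity)]) self_mem_Ici ht ht
  have hzero : lyapunov E M c⁻¹ n 0 ≤ 3 * ∑ j ∈ range (n + 1), M j 0 := by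
    simp only [lyapunov, mul_zero, add_zero, one_pow, one_mul]; linarith
  have hMt := hM n t ht
  have hEt := hE n t ht
  calc (1 + t) ^ n * (M n t + (1 + t) * E n t)
      ≤ (c * ρ) ^ n * (c * (M n t + ρ * E n t)) := by
        refine mul_le_mul (pow_le_pow_left₀ (by linarith) hρ n) (by nlinarith)
          (add_nonneg hMt (mul_nonneg (by linarith) hEt)) (pow_nonneg (by linarith) n)
    _ = c ^ (n + 1) * (ρ ^ n * (M n t + ρ * E n t)) := by rw [mul_pow, pow_succ]; ring
    _ ≤ c ^ (n + 1) * (3 * ∑ j ∈ range (n + 1), M j 0) :=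
        mul_le_mul_of_nonneg_left (by linarith) (by positivity)
    _ = 3 * c ^ (n + 1) * ∑ j ∈ range (n + 1), M j 0 := by ring

end Lyapunov

theorem le_pow_mul_sum_iterate {α : Type*} {T L : α → α} {N : α → ℝ} {c : ℝ}
    (hN : ∀ p, 0 ≤ N p) (hc : 0 ≤ c) (hTL : Function.Commute T L)
    (hT : ∀ p, N (T p) ≤ c * (N (L p) + N p)) (k : ℕ) (p : α) :
    N (T^[k] p) ≤ (2 * c) ^ k * ∑ j ∈ range (k + 1), N (L^[j] p) := by
  induction k generalizing p with
  | zero => simp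
  | succ k ih =>
    have hshift : ∑ j ∈ range (k + 1), N (L^[j] (L p)) ≤ ∑ j ∈ range (k + 2), N (L^[j] p) := by
      simp only [← Function.iterate_succ_apply, Nat.succ_eq_add_one]
      rw [sum_range_succ' (fun j => N (L^[j] p))]
      linarith [hN (L^[0] p)]
    have htrunc : ∑ j ∈ range (k + 1), N (L^[j] p) ≤ ∑ j ∈ range (k + 2), N (L^[j] p) := by
      rw [sum_range_succ _ (k + 1)]
      linarith [hN (L^[k + 1] p)]
    calc N (T^[k + 1] p) ≤ c * (N (T^[k] (L p)) + N (T^[k] p)) := by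
          rw [Function.iterate_succ_apply', (hTL.iterate_left k).eq]
          exact hT _
      _ ≤ c * ((2 * c) ^ k * ∑ j ∈ range (k + 2), N (L^[j] p)
          + (2 * c) ^ k * ∑ j ∈ range (k + 2), N (L^[j] p)) := by
          gcongr
          · exact (ih (L p)).trans (mul_le_mul_of_nonneg_left hshift (by positivity))
          · exact (ih p).trans (mul_le_mul_of_nonneg_left htrunc (by positivity))
      _ = (2 * c) ^ (k + 1) * ∑ j ∈ range (k + 2), N (L^[j] p) := by ring

theorem sum_iterate_le {α : Type*} {T L : α → α} {N : α → ℝ} {c : ℝ}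
    (hN : ∀ p, 0 ≤ N p) (hc : 1 ≤ c) (hTL : Function.Commute T L)
    (hT : ∀ p, N (T p) ≤ c * (N (L p) + N p)) (n : ℕ) (p : α) :
    ∑ j ∈ range (n + 1), N (T^[j] p)
      ≤ (n + 1) * ((2 * c) ^ n * ∑ j ∈ range (n + 1), N (L^[j] p)) := by
  have hbound : ∀ j ∈ range (n + 1),
      N (T^[j] p) ≤ (2 * c) ^ n * ∑ i ∈ range (n + 1), N (L^[i] p) := by
    intro j hj
    have hj : j ≤ n := Nat.lt_succ_iff.mp (mem_range.mp hj)
    refine (le_pow_mul_sum_iterate hN (by linarith) hTL hT j p).trans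
      (mul_le_mul (pow_le_pow_right₀ (by linarith) hj) ?_
        (sum_nonneg fun i _ => hN _) (by positivity))
    exact sum_le_sum_of_subset_of_nonneg (range_subset_range.mpr (by omega)) fun i _ _ => hN _
  simpa using sum_le_sum hbound

lemma norm_add_sq_le_two_mul {E : Type*} [SeminormedAddCommGroup E] (x y : E) :
    ‖x + y‖ ^ 2 ≤ 2 * (‖x‖ ^ 2 + ‖y‖ ^ 2) :=
  (pow_le_pow_left₀ (norm_nonneg _) (norm_add_le x y) 2).trans add_sq_le

section DampedWave

variable {H : Type*} [NormedAddCommGroup H] [InnerProductSpace ℝ H] {A S : H →L[ℝ] H}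

-- `dampedNormSq A p` is `‖p‖_H²` and `dampedGenerator A` is `L`.
noncomputable def dampedEnergy (A : H →L[ℝ] H) (p : H × H) : ℝ := ‖p.2‖ ^ 2 + ⟪A p.1, p.1⟫

noncomputable def dampedNormSq (A : H →L[ℝ] H) (p : H × H) : ℝ :=
  ⟪A p.1, p.1⟫ + (1 / 4) * ‖p.1‖ ^ 2 + ‖p.2 + (1 / 2 : ℝ) • p.1‖ ^ 2

def dampedGenerator (A : H →L[ℝ] H) (p : H × H) : H × H := (p.2, -A p.1 - p.2)

lemma norm_half_smul_sq (x : H) : ‖(1 / 2 : ℝ) • x‖ ^ 2 = 1 / 4 * ‖x‖ ^ 2 := by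
  rw [norm_smul, mul_pow]; norm_num

lemma dampedEnergy_nonneg (hA : ∀ x, 0 ≤ ⟪A x, x⟫) (p : H × H) : 0 ≤ dampedEnergy A p :=
  add_nonneg (sq_nonneg _) (hA p.1)

lemma dampedNormSq_nonneg (hA : ∀ x, 0 ≤ ⟪A x, x⟫) (p : H × H) : 0 ≤ dampedNormSq A p := by
  unfold dampedNormSq; have := hA p.1; positivity

lemma sq_norm_fst_le_dampedNormSq (hA : ∀ x, 0 ≤ ⟪A x, x⟫) (p : H × H) :
    ‖p.1‖ ^ 2 ≤ 4 * dampedNormSq A p := by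
  unfold dampedNormSq; nlinarith [hA p.1, sq_nonneg ‖p.2 + (1 / 2 : ℝ) • p.1‖]

lemma dampedEnergy_le_two_mul_dampedNormSq (hA : ∀ x, 0 ≤ ⟪A x, x⟫) (p : H × H) :
    dampedEnergy A p ≤ 2 * dampedNormSq A p := by
  have h := norm_add_sq_le_two_mul (p.2 + (1 / 2 : ℝ) • p.1) (-((1 / 2 : ℝ) • p.1))
  rw [add_neg_cancel_right, norm_neg, norm_half_smul_sq] at h
  unfold dampedEnergy dampedNormSq; nlinarith [hA p.1]

lemma inner_apply_self_eq_norm_sq [CompleteSpace H] (hS : IsSelfAdjoint S) (hSA : S * S = A)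
    (x : H) :
    ⟪A x, x⟫ = ‖S x‖ ^ 2 := by
  rw [← hSA, mul_apply_eq_comp]
  exact (hS.isSymmetric (S x) x).trans (real_inner_self_eq_norm_sq _)

lemma dampedNormSq_map_le_dampedEnergy [CompleteSpace H] (hA : ∀ x, 0 ≤ ⟪A x, x⟫)
    (hS : IsSelfAdjoint S) (hSA : S * S = A) (f g : H) :
    dampedNormSq A (S f, S g) ≤ 3 * dampedEnergy A (S f, S g) + dampedEnergy A (f, g) := by
  have h := norm_add_sq_le_two_mul (S g) ((1 / 2 : ℝ) • S f)
  rw [norm_half_smul_sq] at h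
  have hf := inner_apply_self_eq_norm_sq hS hSA f
  unfold dampedEnergy dampedNormSq
  nlinarith [hA (S f), sq_nonneg ‖g‖]

lemma dampedNormSq_map_le [CompleteSpace H] (hA : ∀ x, 0 ≤ ⟪A x, x⟫) (hS : IsSelfAdjoint S)
    (hSA : S * S = A) (p : H × H) :
    dampedNormSq A (Prod.map S S p)
      ≤ 4 * (dampedNormSq A (dampedGenerator A p) + dampedNormSq A p) := by
  obtain ⟨f, g⟩ := p
  have hAf : ⟪A (S f), S f⟫ = ‖A f‖ ^ 2 := by
    rw [inner_apply_self_eq_norm_sq hS hSA, ← hSA, mul_apply_eq_comp]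
  have hmix : ‖S g + (1 / 2 : ℝ) • S f‖ ^ 2 ≤ 2 * ⟪A g, g⟫ + 1 / 2 * ⟪A f, f⟫ := by
    have h := norm_add_sq_le_two_mul (S g) ((1 / 2 : ℝ) • S f)
    rw [norm_half_smul_sq, ← inner_apply_self_eq_norm_sq hS hSA,
      ← inner_apply_self_eq_norm_sq hS hSA] at h
    linarith
  have hAf_le : ‖A f‖ ^ 2 ≤ 2 * ‖A f + (1 / 2 : ℝ) • g‖ ^ 2 + 1 / 2 * ‖g‖ ^ 2 := by
    have h := norm_add_sq_le_two_mul (A f + (1 / 2 : ℝ) • g) (-((1 / 2 : ℝ) • g))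
    rw [add_neg_cancel_right, norm_neg, norm_half_smul_sq] at h
    linarith
  have hgen : -A f - g + (1 / 2 : ℝ) • g = -(A f + (1 / 2 : ℝ) • g) := by module
  simp only [dampedNormSq, dampedGenerator, Prod.map, hAf, hgen, norm_neg]
  nlinarith [hA f, hA g, sq_nonneg ‖f‖, sq_nonneg ‖g + (1 / 2 : ℝ) • f‖,
    inner_apply_self_eq_norm_sq hS hSA f]

lemma commute_prodMap_dampedGenerator (hSA : S * S = A) :
    Function.Commute (Prod.map S S) (dampedGenerator A) := by
  have hcomm : Commute S A := hSA ▸ (Commute.refl S).mul_right (Commute.refl S)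
  rintro ⟨f, g⟩
  simp only [Prod.map, dampedGenerator, map_sub, map_neg, ← mul_apply_eq_comp, hcomm.eq]

variable {f g : ℝ → H} {t : ℝ}

lemma hasDerivAt_dampedEnergy [CompleteSpace H] (hA : IsSelfAdjoint A)
    (hf : HasDerivAt f (g t) t) (hg : HasDerivAt g (-A (f t) - g t) t) :
    HasDerivAt (fun s => dampedEnergy A (f s, g s)) (-2 * ‖g t‖ ^ 2) t := by
  refine (hg.norm_sq.add ((A.hasFDerivAt.comp_hasDerivAt t hf).inner ℝ hf)).congr_deriv ?_
  have hsymm : ⟪A (g t), f t⟫ = ⟪A (f t), g t⟫ :=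
    (hA.isSymmetric (g t) (f t)).trans (real_inner_comm _ _)
  simp only [Function.comp_apply, hsymm, inner_sub_right, inner_neg_right,
    real_inner_self_eq_norm_sq, real_inner_comm (g t) (A (f t))]
  ring

lemma hasDerivAt_dampedNormSq [CompleteSpace H] (hA : IsSelfAdjoint A)
    (hf : HasDerivAt f (g t) t) (hg : HasDerivAt g (-A (f t) - g t) t) :
    HasDerivAt (fun s => dampedNormSq A (f s, g s)) (-dampedEnergy A (f t, g t)) t := by
  refine ((((A.hasFDerivAt.comp_hasDerivAt t hf).inner ℝ hf).add
    (hf.norm_sq.const_mul (1 / 4))).add (hg.add (hf.const_smul (1 / 2 : ℝ))).norm_sq).congr_deriv ?_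
  have hsymm : ⟪A (g t), f t⟫ = ⟪A (f t), g t⟫ :=
    (hA.isSymmetric (g t) (f t)).trans (real_inner_comm _ _)
  simp only [dampedEnergy, Function.comp_apply, Pi.add_apply, Pi.smul_apply, hsymm,
    inner_add_left, inner_add_right, inner_sub_right, inner_neg_right, real_inner_smul_left,
    real_inner_smul_right, real_inner_self_eq_norm_sq, real_inner_comm (g t) (A (f t)),
    real_inner_comm (f t) (A (f t))]
  ring

lemma prodMap_iterate_apply (S : H →L[ℝ] H) (j : ℕ) (p : H × H) :
    (Prod.map S S)^[j] p = ((S ^ j) p.1, (S ^ j) p.2) := by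
  simp only [Prod.map_iterate, FunLike.coe_pow_eq_iterate]; rfl

lemma hasDerivAt_pow_apply_deriv_of_damped [CompleteSpace H] (hSA : S * S = A) {u : ℝ → H}
    (hu : Differentiable ℝ (deriv u)) (hode : deriv (deriv u) t + A (u t) + deriv u t = 0)
    (j : ℕ) :
    HasDerivAt (fun s => (S ^ j) (deriv u s)) (-A ((S ^ j) (u t)) - (S ^ j) (deriv u t)) t := by
  have hcomm : Commute (S ^ j) A := (hSA ▸ (Commute.refl S).mul_right (Commute.refl S)).pow_left j
  rw [add_assoc, add_eq_zero_iff_eq_neg, neg_add'] at hode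
  refine ((S ^ j).hasFDerivAt.comp_hasDerivAt t (hu t).hasDerivAt).congr_deriv ?_
  rw [hode, map_sub, map_neg, ← mul_apply_eq_comp, hcomm.eq, mul_apply_eq_comp]

theorem pow_mul_dampedNormSq_add_le [CompleteSpace H] (hA : IsSelfAdjoint A)
    (hA0 : ∀ x, 0 ≤ ⟪A x, x⟫) (hS : IsSelfAdjoint S) (hSA : S * S = A) {u : ℝ → H}
    (hu : ContDiff ℝ 2 u) (hode : ∀ t ≥ 0, deriv (deriv u) t + A (u t) + deriv u t = 0)
    (n : ℕ) (ht : 0 ≤ t) :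
    (1 + t) ^ n * (dampedNormSq A ((S ^ n) (u t), (S ^ n) (deriv u t))
        + (1 + t) * dampedEnergy A ((S ^ n) (u t), (S ^ n) (deriv u t)))
      ≤ 3 * (6 * (n + 1)) ^ (n + 1)
        * ∑ j ∈ range (n + 1), dampedNormSq A ((S ^ j) (u 0), (S ^ j) (deriv u 0)) := by
  have hf : ∀ j s, HasDerivAt (fun r => (S ^ j) (u r)) ((S ^ j) (deriv u s)) s := fun j s =>
    (S ^ j).hasFDerivAt.comp_hasDerivAt s ((hu.differentiable two_ne_zero) s).hasDerivAt
  have hg := fun j s (hs : 0 ≤ s) =>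
    hasDerivAt_pow_apply_deriv_of_damped hSA hu.differentiable_deriv_two (hode s hs) j
  refine pow_mul_le_of_lyapunov
    (E := fun j s => dampedEnergy A ((S ^ j) (u s), (S ^ j) (deriv u s)))
    (M := fun j s => dampedNormSq A ((S ^ j) (u s), (S ^ j) (deriv u s)))
    (E' := fun s => -2 * ‖(S ^ n) (deriv u s)‖ ^ 2)
    (fun j s _ => dampedEnergy_nonneg hA0 _) (fun j s _ => dampedNormSq_nonneg hA0 _)
    (fun j s _ => ?_) (fun s hs => hasDerivAt_dampedEnergy hA (hf n s) (hg n s hs))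
    (fun s _ => by nlinarith [sq_nonneg ‖(S ^ n) (deriv u s)‖])
    (fun j s hs => hasDerivAt_dampedNormSq hA (hf j s) (hg j s hs))
    (dampedEnergy_le_two_mul_dampedNormSq hA0 _) ht
  simpa only [pow_succ', mul_apply_eq_comp] using
    dampedNormSq_map_le_dampedEnergy hA0 hS hSA ((S ^ j) (u s)) ((S ^ j) (deriv u s))

end DampedWave

/-- Lemma 2.6, estimate for `Sⁿ u` with `S = √A`:
`‖Sⁿ u(t)‖² + (1+t) E(Sⁿ u;t) ≤ C (1+t)^{-n} ‖(u0,u1)‖_{D(Lⁿ)}²`. -/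
theorem stmt_7 :
    ∀ n : ℕ, ∃ C : ℝ, 0 < C ∧
      ∀ (H : Type u) [NormedAddCommGroup H] [InnerProductSpace ℝ H] [CompleteSpace H]
        (A S : H →L[ℝ] H), IsSelfAdjoint A → (∀ x : H, 0 ≤ ⟪A x, x⟫) →
        IsSelfAdjoint S → (∀ x : H, 0 ≤ ⟪S x, x⟫) → S * S = A →
        ∀ (u : ℝ → H) (u0 u1 : H), ContDiff ℝ 2 u →
          (∀ t ≥ (0:ℝ), deriv (deriv u) t + A (u t) + deriv u t = 0) →
          u 0 = u0 → deriv u 0 = u1 →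
          ∀ t ≥ (0:ℝ),
            ‖(S ^ n) (u t)‖ ^ 2
                + (1 + t) * (‖deriv (fun s => (S ^ n) (u s)) t‖ ^ 2
                    + ⟪A ((S ^ n) (u t)), (S ^ n) (u t)⟫)
              ≤ C * (1 + t) ^ (-(n : ℝ)) *
                  ∑ k ∈ Finset.range (n + 1),
                    (fun p : H × H =>
                        ⟪A p.1, p.1⟫ + (1 / 4) * ‖p.1‖ ^ 2
                          + ‖p.2 + (1 / 2 : ℝ) • p.1‖ ^ 2)
                      ((fun p : H × H => (p.2, -A p.1 - p.2))^[k] (u0, u1)) := by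
  intro n
  refine ⟨12 * (6 * (n + 1)) ^ (n + 1) * ((n + 1) * 8 ^ n), by positivity, ?_⟩
  intro H _ _ _ A S hA hA0 hS _ hSA u u0 u1 hu hode hu0 hu1 t ht
  change _ ≤ _ * ∑ k ∈ range (n + 1), dampedNormSq A ((dampedGenerator A)^[k] (u0, u1))
  have hdecay := pow_mul_dampedNormSq_add_le hA hA0 hS hSA hu hode n ht
  have hdata := sum_iterate_le (dampedNormSq_nonneg hA0) (by norm_num : (1 : ℝ) ≤ 4)
    (commute_prodMap_dampedGenerator hSA) (dampedNormSq_map_le hA0 hS hSA) n (u0, u1)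
  simp only [prodMap_iterate_apply] at hdata
  rw [hu0, hu1] at hdecay
  have hderiv : deriv (fun s => (S ^ n) (u s)) t = (S ^ n) (deriv u t) :=
    ((S ^ n).hasFDerivAt.comp_hasDerivAt t ((hu.differentiable two_ne_zero) t).hasDerivAt).deriv
  have hw := sq_norm_fst_le_dampedNormSq hA0 ((S ^ n) (u t), (S ^ n) (deriv u t))
  have h1t : 0 < 1 + t := by linarith
  rw [hderiv, Real.rpow_neg h1t.le, Real.rpow_natCast]
  set w := ((S ^ n) (u t), (S ^ n) (deriv u t))
  calc ‖w.1‖ ^ 2 + (1 + t) * dampedEnergy A w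
      ≤ 4 * (dampedNormSq A w + (1 + t) * dampedEnergy A w) := by
        nlinarith [mul_nonneg h1t.le (dampedEnergy_nonneg hA0 w)]
    _ = 4 * ((1 + t) ^ n * (dampedNormSq A w + (1 + t) * dampedEnergy A w)) * ((1 + t) ^ n)⁻¹ := by
        field_simp
    _ ≤ 4 * (3 * (6 * (n + 1)) ^ (n + 1) * ((n + 1) * ((2 * 4) ^ n
          * ∑ k ∈ range (n + 1), dampedNormSq A ((dampedGenerator A)^[k] (u0, u1)))))
          * ((1 + t) ^ n)⁻¹ := by
        gcongr 4 * ?_ * _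
        exact hdecay.trans (mul_le_mul_of_nonneg_left hdata (by positivity))
    _ = _ := by ring
end

section
/- Decomposition identity: let n ≥ 1, let u be the solution of u'' + A u + u' = 0 with data (u0,u1) ∈ H × H, and let U : [0,∞) → H be an (n+2)-times continuously differentiable function satisfying U''(t) + A U(t) + U'(t) = −v_{n−1,0}'(t) for all t ≥ 0, U(0) = 0 and U'(0) = (−1)ⁿ u1. Then u(t) = Σ_{ℓ=0}^{n−1} (d/dt)^ℓ v_{ℓ,0}(t) + (d/dt)ⁿ U(t) for all t ≥ 0. -/
/-!
The profiles are built from `Lₘ(tA) e^{-tA} x`, with `Lₘ` the Laguerre polynomials, and Pascal's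
rule gives `(d/dt + A)[L_{m+1}(tA) e^{-tA} x] = d/dt [Lₘ(tA) e^{-tA} x]`. Consequently
`v_{0,0}' + A v_{0,0} = 0` and `v_{ℓ+1,0}' + A v_{ℓ+1,0} = -v_{ℓ,0}'`. So if `U` solves the damped
equation with forcing `-v_{n-1,0}'` and data `(0, (-1)ⁿ u1)`, then `v_{n-1,0} + U'` solves it with
forcing `-v_{n-2,0}'` and data `(0, (-1)ⁿ⁻¹ u1)`, or, when `n = 1`, is a solution of the homogeneous
equation with data `(u0, u1)`, hence equal to `u` by uniqueness for the first-order system in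
`H × H`. Peeling off one profile at a time gives the decomposition.
-/

open scoped RealInnerProductSpace

universe u

/-- The auxiliary profiles `v_{ℓ,0}(t)` from Section 2.2.1. -/
noncomputable def vl0 {H : Type u} [NormedAddCommGroup H] [InnerProductSpace ℝ H]
    [CompleteSpace H] (A : H →L[ℝ] H) (u0 u1 : H) (ℓ : ℕ) (t : ℝ) : H :=
  ((-1 : ℝ) ^ ℓ) •
    ((∑ j ∈ Finset.range (ℓ + 1),
        ((ℓ.choose j : ℝ) * ((-t) ^ j / (Nat.factorial j : ℝ))) •
          ((A ^ j) (NormedSpace.exp ((-t) • A) (u0 + u1))))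
      - ∑ j ∈ Finset.range ℓ,
          (((ℓ - 1).choose j : ℝ) * ((-t) ^ j / (Nat.factorial j : ℝ))) •
            ((A ^ j) (NormedSpace.exp ((-t) • A) u0)))

open Finset Set
open scoped Nat

section LaguerreExp

variable {H : Type*} [NormedAddCommGroup H] [NormedSpace ℝ H] (A : H →L[ℝ] H) (x : H)

noncomputable def expTerm (j : ℕ) (t : ℝ) : H :=
  ((-t) ^ j / (j ! : ℝ)) • (A ^ j) (NormedSpace.exp ((-t) • A) x)

/-- `Lₘ(tA) e^{-tA} x`, where `Lₘ(s) = ∑_{j ≤ m} C(m, j) (-s)ʲ / j!` is the Laguerre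
polynomial. -/
noncomputable def laguerreExp (m : ℕ) (t : ℝ) : H :=
  ∑ j ∈ range (m + 1), (m.choose j : ℝ) • expTerm A x j t

noncomputable def prevLaguerreExp : ℕ → ℝ → H
  | 0 => 0
  | m + 1 => laguerreExp A x m

theorem laguerreExp_apply_zero (m : ℕ) : laguerreExp A x m 0 = x := by
  rw [laguerreExp, sum_range_succ']
  simp [expTerm]

variable [CompleteSpace H]

theorem hasDerivAt_exp_neg_smul_apply (t : ℝ) :
    HasDerivAt (fun s : ℝ => NormedSpace.exp ((-s) • A) x)
      (-A (NormedSpace.exp ((-t) • A) x)) t := by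
  have h := (ContinuousLinearMap.apply ℝ H x).hasFDerivAt.comp_hasDerivAt t
    (hasDerivAt_exp_smul_const' (𝕂 := ℝ) (-A) t)
  simpa [Function.comp_def, smul_neg, neg_smul] using h

theorem contDiff_exp_neg_smul_apply {k : WithTop ℕ∞} :
    ContDiff ℝ k (fun s : ℝ => NormedSpace.exp ((-s) • A) x) := by
  have hexp : ContDiff ℝ k (NormedSpace.exp : (H →L[ℝ] H) → (H →L[ℝ] H)) :=
    contDiff_iff_contDiffAt.2 fun B => (NormedSpace.exp_analytic B).contDiffAt
  exact (ContinuousLinearMap.apply ℝ H x).contDiff.comp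
    (hexp.comp (contDiff_id.neg.smul contDiff_const))

theorem contDiff_expTerm (j : ℕ) {k : WithTop ℕ∞} : ContDiff ℝ k (expTerm A x j) :=
  ((contDiff_id.neg.pow j).div_const _).smul
    ((A ^ j).contDiff.comp (contDiff_exp_neg_smul_apply A x))

theorem deriv_expTerm_zero_add (t : ℝ) :
    deriv (expTerm A x 0) t + A (expTerm A x 0 t) = 0 := by
  have h : expTerm A x 0 = fun s => NormedSpace.exp ((-s) • A) x := by
    funext s; simp [expTerm]
  rw [h, (hasDerivAt_exp_neg_smul_apply A x t).deriv, neg_add_cancel]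

theorem deriv_expTerm_succ_add (j : ℕ) (t : ℝ) :
    deriv (expTerm A x (j + 1)) t + A (expTerm A x (j + 1) t) = -A (expTerm A x j t) := by
  have hcoeff : HasDerivAt (fun s : ℝ => (-s) ^ (j + 1) / ((j + 1)! : ℝ))
      (-((-t) ^ j / (j ! : ℝ))) t := by
    refine (((hasDerivAt_id t).neg.pow (j + 1)).div_const _).congr_deriv ?_
    rw [Nat.factorial_succ, Nat.cast_mul]
    field_simp
    simp
  have hvec := (A ^ (j + 1)).hasFDerivAt.comp_hasDerivAt t (hasDerivAt_exp_neg_smul_apply A x t)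
  have hderiv : HasDerivAt (expTerm A x (j + 1)) _ t := hcoeff.smul hvec
  rw [hderiv.deriv]
  have hpow : ∀ y, A ((A ^ j) y) = (A ^ (j + 1)) y := fun y => by rw [pow_succ']; rfl
  have hcomm : ∀ y, (A ^ (j + 1)) (A y) = A ((A ^ (j + 1)) y) := fun y =>
    show (A ^ (j + 1) * A) y = (A * A ^ (j + 1)) y by rw [pow_mul_comm']
  simp only [expTerm, map_neg, map_smul, smul_neg, hpow, hcomm]
  module

theorem contDiff_laguerreExp (m : ℕ) {k : WithTop ℕ∞} :
    ContDiff ℝ k (laguerreExp A x m) := by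
  unfold laguerreExp
  exact ContDiff.sum fun j _ => (contDiff_expTerm A x j).const_smul _

theorem contDiff_prevLaguerreExp (m : ℕ) {k : WithTop ℕ∞} :
    ContDiff ℝ k (prevLaguerreExp A x m) := by
  cases m with
  | zero => exact contDiff_const
  | succ m => exact contDiff_laguerreExp A x m

theorem deriv_laguerreExp_add (m : ℕ) (t : ℝ) :
    deriv (laguerreExp A x m) t + A (laguerreExp A x m t) =
      -∑ i ∈ range m, (m.choose (i + 1) : ℝ) • A (expTerm A x i t) := by
  have hderiv : deriv (laguerreExp A x m) t =
      ∑ j ∈ range (m + 1), (m.choose j : ℝ) • deriv (expTerm A x j) t := by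
    unfold laguerreExp
    exact (HasDerivAt.fun_sum fun j _ => (((contDiff_expTerm A x j (k := 1)).differentiable
      one_ne_zero t).hasDerivAt.const_smul _)).deriv
  rw [hderiv, laguerreExp, map_sum, ← sum_add_distrib]
  simp_rw [map_smul, ← smul_add]
  rw [sum_range_succ']
  simp [deriv_expTerm_succ_add, deriv_expTerm_zero_add]

theorem deriv_laguerreExp_succ_add (m : ℕ) (t : ℝ) :
    deriv (laguerreExp A x (m + 1)) t + A (laguerreExp A x (m + 1) t) =
      deriv (laguerreExp A x m) t := by
  rw [eq_sub_of_add_eq (deriv_laguerreExp_add A x m t), deriv_laguerreExp_add, laguerreExp,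
    map_sum]
  simp only [Nat.choose_succ_succ' m, Nat.cast_add, add_smul, sum_add_distrib, map_smul,
    sum_range_succ _ m, Nat.choose_succ_self, Nat.cast_zero, zero_smul, add_zero]
  abel

theorem deriv_laguerreExp_add_eq_deriv_prev (m : ℕ) (t : ℝ) :
    deriv (laguerreExp A x m) t + A (laguerreExp A x m t) =
      deriv (prevLaguerreExp A x m) t := by
  cases m with
  | zero => simp [deriv_laguerreExp_add, prevLaguerreExp]
  | succ m => exact deriv_laguerreExp_succ_add A x m t

end LaguerreExp

section Profiles

variable {H : Type*} [NormedAddCommGroup H] [InnerProductSpace ℝ H] [CompleteSpace H]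
  (A : H →L[ℝ] H) (u0 u1 : H)

theorem vl0_eq_laguerreExp (ℓ : ℕ) :
    vl0 A u0 u1 ℓ = fun t =>
      ((-1 : ℝ) ^ ℓ) • (laguerreExp A (u0 + u1) ℓ t - prevLaguerreExp A u0 ℓ t) := by
  funext t
  cases ℓ <;> simp [vl0, laguerreExp, prevLaguerreExp, expTerm, mul_smul]

theorem contDiff_vl0 (ℓ : ℕ) {k : WithTop ℕ∞} : ContDiff ℝ k (vl0 A u0 u1 ℓ) := by
  rw [vl0_eq_laguerreExp]
  exact ((contDiff_laguerreExp A _ ℓ).sub (contDiff_prevLaguerreExp A u0 ℓ)).const_smul _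

theorem deriv_vl0 (ℓ : ℕ) (t : ℝ) :
    deriv (vl0 A u0 u1 ℓ) t = ((-1 : ℝ) ^ ℓ) •
      (deriv (laguerreExp A (u0 + u1) ℓ) t - deriv (prevLaguerreExp A u0 ℓ) t) := by
  rw [vl0_eq_laguerreExp]
  have hS := ((contDiff_laguerreExp A (u0 + u1) ℓ (k := 1)).differentiable one_ne_zero t)
  have hT := ((contDiff_prevLaguerreExp A u0 ℓ (k := 1)).differentiable one_ne_zero t)
  exact ((hS.hasDerivAt.sub hT.hasDerivAt).const_smul _).deriv

theorem deriv_vl0_zero_add (t : ℝ) : deriv (vl0 A u0 u1 0) t + A (vl0 A u0 u1 0 t) = 0 := by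
  rw [deriv_vl0, vl0_eq_laguerreExp]
  simpa [prevLaguerreExp] using deriv_laguerreExp_add_eq_deriv_prev A (u0 + u1) 0 t

theorem deriv_vl0_succ_add (m : ℕ) (t : ℝ) :
    deriv (vl0 A u0 u1 (m + 1)) t + A (vl0 A u0 u1 (m + 1) t) = -deriv (vl0 A u0 u1 m) t := by
  have hsum := deriv_laguerreExp_succ_add A (u0 + u1) m t
  rw [deriv_vl0, deriv_vl0, vl0_eq_laguerreExp, ← deriv_laguerreExp_add_eq_deriv_prev A u0 m]
  simp only [prevLaguerreExp, map_smul, map_sub]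
  linear_combination (norm := module) ((-1 : ℝ) ^ (m + 1)) • hsum

theorem vl0_zero_apply_zero : vl0 A u0 u1 0 0 = u0 + u1 := by
  simp [vl0_eq_laguerreExp, laguerreExp_apply_zero, prevLaguerreExp]

theorem vl0_succ_apply_zero (m : ℕ) : vl0 A u0 u1 (m + 1) 0 = ((-1 : ℝ) ^ (m + 1)) • u1 := by
  simp [vl0_eq_laguerreExp, laguerreExp_apply_zero, prevLaguerreExp]

end Profiles

theorem eqOn_deriv_of_eqOn_Ici {E : Type*} [NormedAddCommGroup E] [NormedSpace ℝ E]
    {f g : ℝ → E} {a : ℝ} (hf : Differentiable ℝ f) (hg : Differentiable ℝ g)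
    (h : EqOn f g (Ici a)) :
    EqOn (deriv f) (deriv g) (Ici a) := fun t ht => by
  rw [← (hf t).derivWithin (uniqueDiffOn_Ici a t ht), ← (hg t).derivWithin
    (uniqueDiffOn_Ici a t ht), derivWithin_congr h (h ht)]

section DampedEquation

variable {H : Type*} [NormedAddCommGroup H] [NormedSpace ℝ H] (A : H →L[ℝ] H)

noncomputable def dampedOp (f : ℝ → H) (t : ℝ) : H := deriv (deriv f) t + A (f t) + deriv f t

theorem hasDerivAt_dampedOp {f : ℝ → H} (hf : ContDiff ℝ 3 f) (t : ℝ) :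
    HasDerivAt (dampedOp A f) (dampedOp A (deriv f) t) t := by
  have hf' : ContDiff ℝ 2 (deriv f) := hf.deriv'
  have hf'' : ContDiff ℝ 1 (deriv (deriv f)) := hf'.deriv'
  have hd := (hf''.differentiable one_ne_zero t).hasDerivAt
  have hd' := (hf'.differentiable two_ne_zero t).hasDerivAt
  have hd0 := (hf.differentiable (by norm_num) t).hasDerivAt
  exact (hd.add (A.hasFDerivAt.comp_hasDerivAt t hd0)).add hd'

theorem dampedOp_add {f g : ℝ → H} (hf : ContDiff ℝ 2 f) (hg : ContDiff ℝ 2 g) :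
    dampedOp A (f + g) = dampedOp A f + dampedOp A g := by
  have h1 : deriv (f + g) = deriv f + deriv g :=
    funext fun t => deriv_add (hf.differentiable two_ne_zero t) (hg.differentiable two_ne_zero t)
  have h2 : deriv (deriv f + deriv g) = deriv (deriv f) + deriv (deriv g) :=
    funext fun t => deriv_add (hf.differentiable_deriv_two t) (hg.differentiable_deriv_two t)
  funext t
  simp only [dampedOp, h1, h2, Pi.add_apply, map_add]
  abel

theorem eqOn_Ici_of_dampedOp_eq_zero {y z : ℝ → H} (hy : ContDiff ℝ 2 y)
    (hz : ContDiff ℝ 2 z)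
    (hy_eq : EqOn (dampedOp A y) 0 (Ici 0)) (hz_eq : EqOn (dampedOp A z) 0 (Ici 0))
    (h0 : y 0 = z 0) (h1 : deriv y 0 = deriv z 0) : EqOn y z (Ici 0) := by
  intro T hT
  -- the first-order system `(w, w')' = L (w, w')` in phase space
  let L : H × H →L[ℝ] H × H :=
    (ContinuousLinearMap.snd ℝ H H).prod
      (-(A.comp (ContinuousLinearMap.fst ℝ H H)) - ContinuousLinearMap.snd ℝ H H)
  have hphase : ∀ w : ℝ → H, ContDiff ℝ 2 w → EqOn (dampedOp A w) 0 (Ici 0) →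
      ∀ t ∈ Ico (0 : ℝ) T, HasDerivWithinAt (fun s => (w s, deriv w s))
        (L (w t, deriv w t)) (Ici t) t := by
    intro w hw hweq t ht
    refine (((hw.differentiable two_ne_zero t).hasDerivAt.prodMk
      (hw.differentiable_deriv_two t).hasDerivAt).congr_deriv ?_).hasDerivWithinAt
    have hw2 : deriv (deriv w) t = -A (w t) - deriv w t := by
      have := hweq ht.1
      rw [dampedOp, Pi.zero_apply] at this
      rw [← sub_eq_zero, ← this]
      abel
    simp [L, hw2]
  have hcont : ∀ w : ℝ → H, ContDiff ℝ 2 w →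
      ContinuousOn (fun s => (w s, deriv w s)) (Icc 0 T) :=
    fun w hw => (hw.continuous.prodMk (hw.continuous_deriv one_le_two)).continuousOn
  have hphase_eq := ODE_solution_unique_of_mem_Icc_right (v := fun _ => L) (s := fun _ => univ)
    (fun _ _ => L.lipschitz.lipschitzOnWith) (hcont y hy) (hphase y hy hy_eq)
    (fun _ _ => mem_univ _) (hcont z hz) (hphase z hz hz_eq) (fun _ _ => mem_univ _)
    (Prod.ext h0 h1)
  exact congrArg Prod.fst (hphase_eq ⟨hT, le_rfl⟩)

theorem dampedOp_add_deriv {v U : ℝ → H} (hv : ContDiff ℝ 2 v) (hU : ContDiff ℝ 3 U)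
    (hUeq : EqOn (dampedOp A U) (-deriv v) (Ici 0)) :
    EqOn (dampedOp A (v + deriv U)) (fun t => deriv v t + A (v t)) (Ici 0) := by
  intro t ht
  have hU' : EqOn (dampedOp A (deriv U)) (-deriv (deriv v)) (Ici 0) := by
    have h := eqOn_deriv_of_eqOn_Ici (fun s => (hasDerivAt_dampedOp A hU s).differentiableAt)
      hv.differentiable_deriv_two.neg hUeq
    intro s hs
    rw [← (hasDerivAt_dampedOp A hU s).deriv, h hs, Pi.neg_def, deriv.fun_neg]
    rfl
  rw [dampedOp_add A hv hU.deriv', Pi.add_apply, hU' ht, dampedOp]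
  simp only [Pi.neg_apply]
  abel

theorem deriv_add_deriv_apply_zero {v U : ℝ → H} (hv : Differentiable ℝ v)
    (hU : ContDiff ℝ 2 U)
    (hUeq : dampedOp A U 0 = -deriv v 0) (hU0 : U 0 = 0) :
    deriv (v + deriv U) 0 = -deriv U 0 := by
  rw [deriv_add (hv 0) (hU.differentiable_deriv_two 0)]
  rw [dampedOp, hU0, map_zero, add_zero] at hUeq
  rw [← sub_eq_zero, ← sub_eq_zero.2 hUeq]
  abel

end DampedEquation

section Decomposition

variable {H : Type*} [NormedAddCommGroup H] [InnerProductSpace ℝ H] [CompleteSpace H]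
  (A : H →L[ℝ] H) (u0 u1 : H)

/-- The right-hand side of the equation for the `n`-th remainder: `0` for `n = 0` (the
remainder is `u` itself) and `-v_{n-1,0}'` otherwise. -/
noncomputable def remainderForcing : ℕ → ℝ → H
  | 0 => 0
  | n + 1 => -deriv (vl0 A u0 u1 n)

theorem deriv_vl0_add_eq_remainderForcing (n : ℕ) (t : ℝ) :
    deriv (vl0 A u0 u1 n) t + A (vl0 A u0 u1 n t) = remainderForcing A u0 u1 n t := by
  cases n with
  | zero => exact deriv_vl0_zero_add A u0 u1 t
  | succ m => exact deriv_vl0_succ_add A u0 u1 m t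

theorem vl0_apply_zero_add (n : ℕ) :
    vl0 A u0 u1 n 0 + ((-1 : ℝ) ^ (n + 1)) • u1 = if n = 0 then u0 else 0 := by
  cases n with
  | zero => simp [vl0_zero_apply_zero]
  | succ m => simp [vl0_succ_apply_zero, pow_succ]

variable {A u0 u1}

theorem eqOn_sum_iteratedDeriv_vl0_add_iteratedDeriv {u : ℝ → H} (hu : ContDiff ℝ 2 u)
    (hueq : EqOn (dampedOp A u) 0 (Ici 0)) (hu0 : u 0 = u0) (hu1 : deriv u 0 = u1) (n : ℕ)
    {U : ℝ → H} (hU : ContDiff ℝ (n + 2 : ℕ) U)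
    (hUeq : EqOn (dampedOp A U) (remainderForcing A u0 u1 n) (Ici 0))
    (hU0 : U 0 = if n = 0 then u0 else 0) (hU1 : deriv U 0 = ((-1 : ℝ) ^ n) • u1) :
    EqOn u (fun t => ∑ ℓ ∈ range n, iteratedDeriv ℓ (vl0 A u0 u1 ℓ) t + iteratedDeriv n U t)
      (Ici 0) := by
  induction n generalizing U with
  | zero =>
    simpa using eqOn_Ici_of_dampedOp_eq_zero A hu hU hueq hUeq
      (by simpa using hu0.trans hU0.symm) (by simpa [hu1] using hU1.symm)
  | succ n ih =>
    have hU3 : ContDiff ℝ 3 U := hU.of_le (by exact_mod_cast (by omega : 3 ≤ n + 1 + 2))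
    have hU' : ContDiff ℝ (n + 2 : ℕ) (deriv U) := ContDiff.deriv' (by exact_mod_cast hU)
    have hv := contDiff_vl0 A u0 u1 n (k := (n + 2 : ℕ))
    -- `v_{n,0} + U'` is the remainder of the previous level
    have hW : ContDiff ℝ (n + 2 : ℕ) (vl0 A u0 u1 n + deriv U) := hv.add hU'
    have hWeq : EqOn (dampedOp A (vl0 A u0 u1 n + deriv U)) (remainderForcing A u0 u1 n)
        (Ici 0) := fun s hs =>
      (dampedOp_add_deriv A (contDiff_vl0 A u0 u1 n) hU3 hUeq hs).trans
        (deriv_vl0_add_eq_remainderForcing A u0 u1 n s)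
    have hW0 : (vl0 A u0 u1 n + deriv U) 0 = if n = 0 then u0 else 0 := by
      rw [Pi.add_apply, hU1, vl0_apply_zero_add]
    have hW1 : deriv (vl0 A u0 u1 n + deriv U) 0 = ((-1 : ℝ) ^ n) • u1 := by
      rw [deriv_add_deriv_apply_zero A (hv.differentiable (by simp)) (hU3.of_le (by norm_num))
        (hUeq self_mem_Ici) (by simpa using hU0), hU1, pow_succ]
      module
    intro t ht
    rw [ih hW hWeq hW0 hW1 ht]
    dsimp only
    rw [sum_range_succ, iteratedDeriv_add (contDiff_vl0 A u0 u1 n).contDiffAt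
      (hU'.of_le (by exact_mod_cast (by omega : n ≤ n + 2))).contDiffAt,
      iteratedDeriv_succ']
    abel

end Decomposition

theorem stmt_14_general {H : Type u} [NormedAddCommGroup H] [InnerProductSpace ℝ H] [CompleteSpace H]
    (A : H →L[ℝ] H)
    (n : ℕ) (hn : 1 ≤ n)
    (u : ℝ → H) (u0 u1 : H) (hu : ContDiff ℝ 2 u)
    (hueq : ∀ t ≥ (0:ℝ), deriv (deriv u) t + A (u t) + deriv u t = 0)
    (hu0 : u 0 = u0) (hu1 : deriv u 0 = u1)
    (U : ℝ → H) (hU : ContDiff ℝ (n + 2 : ℕ) U)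
    (hUeq : ∀ t ≥ (0:ℝ),
      deriv (deriv U) t + A (U t) + deriv U t = -deriv (vl0 A u0 u1 (n - 1)) t)
    (hU0 : U 0 = 0) (hU1 : deriv U 0 = ((-1 : ℝ) ^ n) • u1) :
    ∀ t ≥ (0:ℝ),
      u t = (∑ ℓ ∈ Finset.range n, iteratedDeriv ℓ (vl0 A u0 u1 ℓ) t)
        + iteratedDeriv n U t := by
  obtain ⟨m, rfl⟩ := Nat.exists_eq_add_of_le' hn
  exact fun t ht => eqOn_sum_iteratedDeriv_vl0_add_iteratedDeriv hu (fun s hs => hueq s hs) hu0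
    hu1 (m + 1) hU (fun s hs => hUeq s hs) (by simpa using hU0) hU1 ht

/-- decomposition (2.7): if `U` solves
`U'' + A U + U' = −v_{n−1,0}'` with `U(0) = 0`, `U'(0) = (−1)ⁿ u1`, then
`u(t) = Σ_{ℓ<n} (d/dt)^ℓ v_{ℓ,0}(t) + (d/dt)ⁿ U(t)`. -/
theorem stmt_14 {H : Type u} [NormedAddCommGroup H] [InnerProductSpace ℝ H] [CompleteSpace H]
    (A : H →L[ℝ] H) (hA : IsSelfAdjoint A) (hApos : ∀ x : H, 0 ≤ ⟪A x, x⟫)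
    (n : ℕ) (hn : 1 ≤ n)
    (u : ℝ → H) (u0 u1 : H) (hu : ContDiff ℝ 2 u)
    (hueq : ∀ t ≥ (0:ℝ), deriv (deriv u) t + A (u t) + deriv u t = 0)
    (hu0 : u 0 = u0) (hu1 : deriv u 0 = u1)
    (U : ℝ → H) (hU : ContDiff ℝ (n + 2 : ℕ) U)
    (hUeq : ∀ t ≥ (0:ℝ),
      deriv (deriv U) t + A (U t) + deriv U t = -deriv (vl0 A u0 u1 (n - 1)) t)
    (hU0 : U 0 = 0) (hU1 : deriv U 0 = ((-1 : ℝ) ^ n) • u1) :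
    ∀ t ≥ (0:ℝ),
      u t = (∑ ℓ ∈ Finset.range n, iteratedDeriv ℓ (vl0 A u0 u1 ℓ) t)
        + iteratedDeriv n U t :=
  stmt_14_general A n hn u u0 u1 hu hueq hu0 hu1 U hU hUeq hU0 hU1
end
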